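/- arXiv:2504.20875 — 2 statements merged into one kernel-verified Lean document; each statement's English description precedes it below -/
import Mathlib

section
/- For integers a, b, k with k ≥ b > a ≥ 1 and any ℓ ≥ 0, the map sending (π_1,…,π_ℓ) to (π_1 + k(ℓ−1), π_2 + k(ℓ−2), …, π_{ℓ−1} + k, π_ℓ) is a bijection from R'_{a,b,k}(ℓ) to D'_{a,b,k}(ℓ) preserving ℓ_a and ℓ_b and increasing the weight by exactly k·C(ℓ,2); consequently Σ_{π ∈ D'_{a,b,k}(ℓ)} u^{ℓ_a(π)} v^{ℓ_b(π)} q^{|π|} = q^{k·C(ℓ,2)} Σ_{π ∈ R'_{a,b,k}(ℓ)} u^{ℓ_a(π)} v^{ℓ_b(π)} q^{|π|}. -/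
/-- The finite q-Pochhammer symbol `(t;q)_n = ∏_{i=0}^{n-1} (1 - t qⁱ)`. -/
noncomputable def qPoch (t q : ℂ) (n : ℕ) : ℂ := ∏ i ∈ Finset.range n, (1 - t * q ^ i)

/-- The infinite q-Pochhammer symbol `(t;q)_∞ = ∏_{i≥0} (1 - t qⁱ)`. -/
noncomputable def qPochInf (t q : ℂ) : ℂ := ∏' i : ℕ, (1 - t * q ^ i)

/-- The Gaussian binomial coefficient `[A choose B]` in base `q`:
`(q;q)_A / ((q;q)_B (q;q)_{A-B})` for `A ≥ B ≥ 0`, and `0` otherwise. -/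
noncomputable def gbinom (q : ℂ) (A B : ℕ) : ℂ :=
  if B ≤ A then qPoch q q A / (qPoch q q B * qPoch q q (A - B)) else 0

/-- `lcount k c l` is the number of parts of `l` congruent to `c` modulo `k`. -/
def lcount (k c : ℕ) (l : List ℕ) : ℕ := (l.filter (fun x => x % k = c % k)).length

/-- Add `k(ℓ-1), k(ℓ-2), …, k, 0` to the successive parts of a list of length `ℓ`. -/
def stretch (k : ℕ) (l : List ℕ) : List ℕ := l.mapIdx fun i x => x + k * (l.length - 1 - i)

/-- Membership in `R'_{a,b,k}`: parts `≡ a` or `b (mod k)`, only parts `≡ b (mod k)` repeated. -/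
def memR' (a b k : ℕ) (l : List ℕ) : Prop :=
  l.Pairwise (· ≥ ·) ∧ (∀ x ∈ l, 0 < x ∧ (x % k = a % k ∨ x % k = b % k)) ∧
    (∀ x : ℕ, x % k = a % k → l.count x ≤ 1)

/-- Membership in `D'_{a,b,k}`: parts `≡ a` or `b (mod k)`, consecutive parts differ by at
least `k`, strictly whenever the larger part is `≡ a (mod k)`. -/
def memD' (a b k : ℕ) (l : List ℕ) : Prop :=
  l.Pairwise (· ≥ ·) ∧ (∀ x ∈ l, 0 < x ∧ (x % k = a % k ∨ x % k = b % k)) ∧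
    l.Chain' (fun x y => y + k ≤ x ∧ (x % k = a % k → y + k < x))

/-! Adding `k(ℓ-1-i)` to the `i`-th part turns a descent `x ≥ y` between consecutive parts into
a gap of at least `k`, and a strict descent into a gap of more than `k`, without changing residues
mod `k`. In a weakly decreasing list, "parts `≡ a` are not repeated" says exactly that a part
`≡ a` strictly exceeds its successor, so `R'` and `D'` are the same condition on consecutive parts
before and after stretching. The weight grows by `k(0 + 1 + ⋯ + (ℓ-1)) = k·C(ℓ,2)`. -/

section Stretch

variable (k : ℕ)

@[simp]
lemma stretch_nil : stretch k [] = [] := rfl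

lemma stretch_cons (x : ℕ) (xs : List ℕ) :
    stretch k (x :: xs) = (x + k * xs.length) :: stretch k xs := by
  simp only [stretch, List.mapIdx_cons, List.length_cons, Nat.add_sub_cancel, Nat.sub_zero,
    List.cons.injEq, true_and]
  congr 1
  funext i y
  congr 2
  omega

@[simp]
lemma length_stretch (l : List ℕ) : (stretch k l).length = l.length :=
  List.length_mapIdx

lemma sum_stretch (l : List ℕ) : (stretch k l).sum = l.sum + k * l.length.choose 2 := by
  induction l with
  | nil => rfl
  | cons x xs ih =>
    rw [stretch_cons, List.sum_cons, List.sum_cons, ih, List.length_cons, Nat.choose_succ_succ,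
      Nat.choose_one_right]
    ring

lemma lcount_stretch (c : ℕ) (l : List ℕ) : lcount k c (stretch k l) = lcount k c l := by
  induction l with
  | nil => rfl
  | cons x xs ih =>
    simp only [lcount, stretch_cons, List.filter_cons, Nat.add_mul_mod_self_left] at ih ⊢
    split <;> simp [ih]

lemma stretch_injective : Function.Injective (stretch k) := by
  intro l₁
  induction l₁ with
  | nil => intro l₂ h; simpa using (congrArg List.length h).symm
  | cons x xs ih =>
    rintro (_ | ⟨y, ys⟩) h
    · simpa using congrArg List.length h
    · rw [stretch_cons, stretch_cons, List.cons.injEq] at h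
      obtain rfl := ih h.2
      rw [Nat.add_right_cancel h.1]

variable {k}

lemma forall_mem_stretch {P : ℕ → Prop} (hP : ∀ x j, P x → P (x + k * j)) {l : List ℕ}
    (h : ∀ x ∈ l, P x) : ∀ y ∈ stretch k l, P y := by
  induction l with
  | nil => simp
  | cons x xs ih =>
    simp only [stretch_cons, List.forall_mem_cons] at h ⊢
    exact ⟨hP x _ h.1, ih h.2⟩

end Stretch

def GapAtLeast (k c d x y : ℕ) : Prop := y + d ≤ x ∧ (x % k = c → y + d < x)

instance (k c d : ℕ) : Trans (GapAtLeast k c d) (GapAtLeast k c d) (GapAtLeast k c d) where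
  trans {x y z} hxy hyz := ⟨by have := hyz.1; have := hxy.1; omega,
    fun hx => by have := hyz.1; have := hxy.2 hx; omega⟩

lemma isChain_gapAtLeast_stretch_iff {k c d : ℕ} {l : List ℕ} :
    (stretch k l).IsChain (GapAtLeast k c (d + k)) ↔ l.IsChain (GapAtLeast k c d) := by
  induction l with
  | nil => simp
  | cons x xs ih =>
    cases xs with
    | nil => simp [stretch_cons]
    | cons y ys =>
      rw [stretch_cons, stretch_cons, List.isChain_cons_cons, List.isChain_cons_cons,
        ← stretch_cons, ih]
      simp only [GapAtLeast, List.length_cons, Nat.add_mul_mod_self_left]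
      simp only [Nat.mul_succ]
      constructor <;> rintro ⟨⟨h₁, h₂⟩, h⟩ <;>
        exact ⟨⟨by omega, fun hx => by have := h₂ hx; omega⟩, h⟩

lemma List.pairwise_ge_and_gt_iff_count_le_one {α : Type*} [LinearOrder α] (P : α → Prop)
    (l : List α) :
    l.Pairwise (fun x y => y ≤ x ∧ (P x → y < x)) ↔
      l.Pairwise (· ≥ ·) ∧ ∀ x, P x → l.count x ≤ 1 := by
  simp only [List.pairwise_iff_forall_sublist]
  refine ⟨fun h => ⟨fun hs => (h hs).1, fun x hx => ?_⟩, fun ⟨hge, hcount⟩ x y hs => ⟨hge hs, ?_⟩⟩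
  · by_contra! htwo
    exact lt_irrefl x ((h (List.replicate_sublist_iff.2 htwo)).2 hx)
  · intro hx
    refine lt_of_le_of_ne (hge hs) fun hyx => ?_
    subst hyx
    have htwo : 2 ≤ l.count y :=
      List.replicate_sublist_iff.1 (show (List.replicate 2 y).Sublist l from hs)
    have := hcount y hx
    omega

section Partitions

variable {a b k : ℕ} {l : List ℕ}

lemma memR'_iff : memR' a b k l ↔
    (∀ x ∈ l, 0 < x ∧ (x % k = a % k ∨ x % k = b % k)) ∧ l.IsChain (GapAtLeast k (a % k) 0) := by
  have hgap : GapAtLeast k (a % k) 0 = fun x y => y ≤ x ∧ (x % k = a % k → y < x) := by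
    funext x y
    simp only [GapAtLeast, Nat.add_zero]
  rw [List.isChain_iff_pairwise, hgap, List.pairwise_ge_and_gt_iff_count_le_one, memR']
  tauto

lemma memD'_iff : memD' a b k l ↔
    (∀ x ∈ l, 0 < x ∧ (x % k = a % k ∨ x % k = b % k)) ∧ l.IsChain (GapAtLeast k (a % k) k) :=
  ⟨fun h => ⟨h.2.1, h.2.2⟩, fun ⟨hparts, hchain⟩ =>
    ⟨(List.isChain_iff_pairwise.1 hchain).imp fun hxy => le_of_add_le_left hxy.1, hparts, hchain⟩⟩

end Partitions

lemma mul_length_lt_head {k y : ℕ} {ys : List ℕ} (hchain : (y :: ys).IsChain (· ≥ · + k))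
    (hpos : ∀ z ∈ y :: ys, 0 < z) : k * ys.length < y := by
  induction ys generalizing y with
  | nil => simpa using hpos y List.mem_cons_self
  | cons z zs ih =>
    rw [List.isChain_cons_cons] at hchain
    have hz := ih hchain.2 fun w hw => hpos w (List.mem_cons_of_mem y hw)
    have hgap := hchain.1
    rw [List.length_cons, Nat.mul_succ]
    omega

lemma exists_stretch_eq {k : ℕ} {Q : ℕ → Prop} {m : List ℕ} (hchain : m.IsChain (· ≥ · + k))
    (hm : ∀ y ∈ m, 0 < y ∧ Q (y % k)) :
    ∃ l : List ℕ, (∀ x ∈ l, 0 < x ∧ Q (x % k)) ∧ stretch k l = m := by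
  induction m with
  | nil => exact ⟨[], by simp, rfl⟩
  | cons y ys ih =>
    obtain ⟨xs, hxs, rfl⟩ := ih hchain.tail fun z hz => hm z (List.mem_cons_of_mem y hz)
    have hlt := mul_length_lt_head hchain fun z hz => (hm z hz).1
    rw [length_stretch] at hlt
    have hy : y = (y - k * xs.length) + k * xs.length := by omega
    refine ⟨(y - k * xs.length) :: xs, ?_, by rw [stretch_cons, ← hy]⟩
    refine List.forall_mem_cons.2 ⟨⟨by omega, ?_⟩, hxs⟩
    have hQ := (hm y List.mem_cons_self).2
    rwa [hy, Nat.add_mul_mod_self_left] at hQ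

lemma bijOn_stretch (a b k ℓ : ℕ) :
    Set.BijOn (stretch k) {l : List ℕ | memR' a b k l ∧ l.length = ℓ}
      {l : List ℕ | memD' a b k l ∧ l.length = ℓ} := by
  refine ⟨fun l ⟨hl, hlen⟩ => ?_, (stretch_injective k).injOn, fun m ⟨hm, hlen⟩ => ?_⟩
  · rw [memR'_iff] at hl
    have hchain := isChain_gapAtLeast_stretch_iff (d := 0) |>.2 hl.2
    rw [Nat.zero_add] at hchain
    refine ⟨memD'_iff.2 ⟨forall_mem_stretch (fun x j hx => ?_) hl.1, hchain⟩, by simpa using hlen⟩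
    rw [Nat.add_mul_mod_self_left]
    exact ⟨Nat.add_pos_left hx.1 _, hx.2⟩
  · rw [memD'_iff] at hm
    obtain ⟨l, hl, rfl⟩ := exists_stretch_eq (Q := fun r => r = a % k ∨ r = b % k)
      (hm.2.imp fun _ _ h => h.1) hm.1
    have hchain : l.IsChain (GapAtLeast k (a % k) 0) :=
      isChain_gapAtLeast_stretch_iff.1 (by rw [Nat.zero_add]; exact hm.2)
    exact ⟨l, ⟨memR'_iff.2 ⟨hl, hchain⟩, by simpa using hlen⟩, rfl⟩

theorem shift_R'_to_D'_general (a b k ℓ : ℕ) :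
    Set.BijOn (stretch k) {l : List ℕ | memR' a b k l ∧ l.length = ℓ}
      {l : List ℕ | memD' a b k l ∧ l.length = ℓ}
    ∧ (∀ l : List ℕ, memR' a b k l → l.length = ℓ →
        lcount k a (stretch k l) = lcount k a l ∧
        lcount k b (stretch k l) = lcount k b l ∧
        (stretch k l).sum = l.sum + k * Nat.choose ℓ 2)
    ∧ (∀ q u v : ℂ, ‖q‖ < 1 →
        ∑' π : {l : List ℕ // memD' a b k l ∧ l.length = ℓ},
            u ^ lcount k a π.1 * v ^ lcount k b π.1 * q ^ π.1.sum
          = q ^ (k * Nat.choose ℓ 2) *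
            ∑' π : {l : List ℕ // memR' a b k l ∧ l.length = ℓ},
              u ^ lcount k a π.1 * v ^ lcount k b π.1 * q ^ π.1.sum) := by
  have hbij := bijOn_stretch a b k ℓ
  refine ⟨hbij, fun l _ hlen => ⟨lcount_stretch k a l, lcount_stretch k b l,
    hlen ▸ sum_stretch k l⟩, fun q u v _ => ?_⟩
  let e := hbij.equiv (stretch k)
  rw [← tsum_mul_left]
  refine (e.tsum_eq _).symm.trans (tsum_congr fun π => ?_)
  rw [show (e π : List ℕ) = stretch k π.1 from rfl, lcount_stretch, lcount_stretch, sum_stretch,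
    π.2.2, pow_add]
  ring

/-- Adding `k(ℓ-1), k(ℓ-2), …, k, 0` to the parts is a bijection from `R'_{a,b,k}(ℓ)` onto
`D'_{a,b,k}(ℓ)` preserving `ℓ_a` and `ℓ_b` and increasing the weight by `k·C(ℓ,2)`;
consequently `Σ_{π ∈ D'_{a,b,k}(ℓ)} u^{ℓ_a} v^{ℓ_b} q^{|π|}
  = q^{k C(ℓ,2)} Σ_{π ∈ R'_{a,b,k}(ℓ)} u^{ℓ_a} v^{ℓ_b} q^{|π|}`. -/
theorem shift_R'_to_D' (a b k ℓ : ℕ) (ha : 1 ≤ a) (hab : a < b) (hbk : b ≤ k) :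
    Set.BijOn (stretch k) {l : List ℕ | memR' a b k l ∧ l.length = ℓ}
      {l : List ℕ | memD' a b k l ∧ l.length = ℓ}
    ∧ (∀ l : List ℕ, memR' a b k l → l.length = ℓ →
        lcount k a (stretch k l) = lcount k a l ∧
        lcount k b (stretch k l) = lcount k b l ∧
        (stretch k l).sum = l.sum + k * Nat.choose ℓ 2)
    ∧ (∀ q u v : ℂ, ‖q‖ < 1 →
        ∑' π : {l : List ℕ // memD' a b k l ∧ l.length = ℓ},
            u ^ lcount k a π.1 * v ^ lcount k b π.1 * q ^ π.1.sum
          = q ^ (k * Nat.choose ℓ 2) *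
            ∑' π : {l : List ℕ // memR' a b k l ∧ l.length = ℓ},
              u ^ lcount k a π.1 * v ^ lcount k b π.1 * q ^ π.1.sum) :=
  shift_R'_to_D'_general a b k ℓ
end

section
/- For integers a, b, k with k ≥ b > a ≥ 1, m ≥ 1 and 0 ≤ h ≤ m−1: Σ_{λ ∈ BR_{a,b,k}(m,h,a)} u^{ℓ_a(λ)} v^{ℓ_b(λ)} q^{|λ|} = u^{m−h} v^{h} q^{ma + k·C(h+1,2) + (b−a)h} [m−1 choose h]_k, and Σ_{λ ∈ BR_{a,b,k}(m,h,b)} u^{ℓ_a(λ)} v^{ℓ_b(λ)} q^{|λ|} = u^{m−h−1} v^{h+1} q^{ma + k·C(h+1,2) + (b−a)(h+1)} [m−1 choose h]_k. -/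
/-- Membership in `BR_{a,b,k}(m)`: partitions `(λ_1,…,λ_m)` with exactly `m` parts, each
`≡ a` or `b (mod k)`, only parts `≡ a (mod k)` possibly repeated, `λ_m ∈ {a, b}`, and for
consecutive parts `λ_i - λ_{i+1} ≤ k` with strict inequality if `λ_{i+1} ≡ a (mod k)`. -/
def memBR (a b k m : ℕ) (l : List ℕ) : Prop :=
  l.Pairwise (· ≥ ·) ∧ l.length = m ∧
    (∀ x ∈ l, 0 < x ∧ (x % k = a % k ∨ x % k = b % k)) ∧
    (∀ x : ℕ, x % k = b % k → l.count x ≤ 1) ∧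
    (l.getLast? = some a ∨ l.getLast? = some b) ∧
    l.Chain' (fun x y => x ≤ y + k ∧ (y % k = a % k → x < y + k))

lemma qPoch_zero (t q : ℂ) : qPoch t q 0 = 1 :=
  Finset.prod_range_zero _

lemma qPoch_succ (t q : ℂ) (n : ℕ) : qPoch t q (n + 1) = qPoch t q n * (1 - t * q ^ n) :=
  Finset.prod_range_succ _ _

lemma qPoch_ne_zero {t q : ℂ} (ht : ‖t‖ < 1) (hq : ‖q‖ ≤ 1) (n : ℕ) :
    qPoch t q n ≠ 0 := by
  refine Finset.prod_ne_zero_iff.2 fun i _ => sub_ne_zero.2 fun h => ?_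
  have : ‖t * q ^ i‖ < 1 := by
    rw [norm_mul, norm_pow]
    exact mul_lt_one_of_nonneg_of_lt_one_left (norm_nonneg t) ht (pow_le_one₀ (norm_nonneg q) hq)
  simp [← h] at this

lemma gbinom_of_lt (t : ℂ) {n j : ℕ} (h : n < j) : gbinom t n j = 0 :=
  if_neg (Nat.not_le.2 h)

lemma gbinom_zero_right {t : ℂ} (ht : ‖t‖ < 1) (n : ℕ) : gbinom t n 0 = 1 := by
  simp [gbinom, qPoch_ne_zero ht ht.le, qPoch_zero]

lemma gbinom_succ_succ {t : ℂ} (ht : ‖t‖ < 1) (n j : ℕ) :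
    gbinom t (n + 1) (j + 1) = gbinom t n j + t ^ (j + 1) * gbinom t n (j + 1) := by
  rcases lt_trichotomy j n with hjn | rfl | hnj
  · obtain ⟨d, rfl⟩ := Nat.exists_eq_add_of_lt hjn
    have hne := qPoch_ne_zero ht ht.le
    simp only [gbinom, if_pos (by omega : j + 1 ≤ j + d + 1 + 1),
      if_pos (by omega : j ≤ j + d + 1), if_pos (by omega : j + 1 ≤ j + d + 1),
      show j + d + 1 + 1 - (j + 1) = d + 1 by omega,
      show j + d + 1 - j = d + 1 by omega, show j + d + 1 - (j + 1) = d by omega]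
    rw [mul_div_assoc', div_add_div _ _ (mul_ne_zero (hne _) (hne _)) (mul_ne_zero (hne _) (hne _)),
      div_eq_div_iff (mul_ne_zero (hne _) (hne _))
        (mul_ne_zero (mul_ne_zero (hne _) (hne _)) (mul_ne_zero (hne _) (hne _))),
      qPoch_succ t t (j + d + 1), qPoch_succ t t j, qPoch_succ t t d]
    ring
  · simp [gbinom, qPoch_zero, qPoch_ne_zero ht ht.le]
  · simp [gbinom_of_lt t hnj, gbinom_of_lt t (Nat.succ_lt_succ hnj),
      gbinom_of_lt t (hnj.trans (Nat.lt_succ_self _))]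

section BR

variable {a b k : ℕ}

-- The last clause encodes that parts `≡ b (mod k)` are not repeated.
def BrLink (a b k x y : ℕ) : Prop :=
  (x % k = a % k ∨ x % k = b % k) ∧ y ≤ x ∧ x ≤ y + k ∧
    (y % k = a % k → x < y + k) ∧ (x % k = b % k → x ≠ y)

lemma memBR_cons_cons {m x y : ℕ} {l : List ℕ} :
    memBR a b k (m + 1) (x :: y :: l) ↔ memBR a b k m (y :: l) ∧ BrLink a b k x y := by
  constructor
  · rintro ⟨hsort, hlen, hparts, hcount, hlast, hchain⟩
    obtain ⟨⟨hxk, hxa⟩, hchain⟩ := List.isChain_cons_cons.1 hchain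
    refine ⟨⟨hsort.of_cons, by simpa using hlen,
      fun z hz => hparts z (List.mem_cons_of_mem x hz),
      fun z hz => (List.count_le_count_cons ..).trans (hcount z hz), by simpa using hlast,
      hchain⟩,
      (hparts x List.mem_cons_self).2, List.rel_of_pairwise_cons hsort List.mem_cons_self, hxk, hxa,
      fun hxb hxy => ?_⟩
    have := hcount x hxb
    simp [hxy] at this
  · rintro ⟨⟨hsort, hlen, hparts, hcount, hlast, hchain⟩, hxmod, hyx, hxk, hxa, hxb⟩
    have hle_y : ∀ z ∈ y :: l, z ≤ y := by
      simp only [List.mem_cons, forall_eq_or_imp, le_refl, true_and]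
      exact fun z hz => List.rel_of_pairwise_cons hsort hz
    refine ⟨List.pairwise_cons.2 ⟨fun z hz => (hle_y z hz).trans hyx, hsort⟩,
      by simpa using hlen, ?_, fun z hz => ?_, by simpa using hlast,
      List.isChain_cons_cons.2 ⟨⟨hxk, hxa⟩, hchain⟩⟩
    · simp only [List.mem_cons, forall_eq_or_imp] at hparts ⊢
      exact ⟨⟨hparts.1.1.trans_le hyx, hxmod⟩, hparts⟩
    · rw [List.count_cons]
      by_cases hzx : z = x
      · subst hzx
        have hzl : z ∉ y :: l := fun hzyl => hxb hz ((hle_y z hzyl).antisymm hyx)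
        simp [List.count_eq_zero.2 hzl]
      · simpa [Ne.symm hzx] using hcount z hz

def brSet (a b k m x : ℕ) : Set (List ℕ) := {l | memBR a b k m l ∧ l.head? = some x}

lemma pos_and_mod_of_mem_brSet {m x : ℕ} {l : List ℕ} (hl : l ∈ brSet a b k m x) :
    0 < x ∧ (x % k = a % k ∨ x % k = b % k) :=
  hl.1.2.2.1 x (List.mem_of_mem_head? hl.2)

lemma eq_singleton_of_mem_brSet_one {x : ℕ} {l : List ℕ} (hl : l ∈ brSet a b k 1 x) :
    l = [x] := by
  obtain ⟨z, rfl⟩ := List.length_eq_one_iff.1 hl.1.2.1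
  simpa using hl.2

lemma brSet_one (ha : 0 < a) (hb : 0 < b) (x : ℕ) :
    brSet a b k 1 x = {l | l = [x] ∧ (x = a ∨ x = b)} := by
  ext l
  constructor
  · intro hl
    obtain rfl := eq_singleton_of_mem_brSet_one hl
    simpa using hl.1.2.2.2.2.1
  · rintro ⟨rfl, hx⟩
    refine ⟨⟨List.pairwise_singleton _ _, rfl, ?_, fun z _ => ?_, by simpa using hx,
      List.isChain_singleton _⟩, rfl⟩
    · rcases hx with rfl | rfl <;> simp [*]
    · rw [List.count_singleton]
      split <;> omega

lemma brSet_succ_succ (m x : ℕ) :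
    brSet a b k (m + 2) x =
      List.cons x '' {l | ∃ y, l ∈ brSet a b k (m + 1) y ∧ BrLink a b k x y} := by
  ext l
  constructor
  · rintro ⟨hl, hhead⟩
    rcases l with _ | ⟨x', _ | ⟨y, l⟩⟩
    · simp [memBR] at hl
    · simp [memBR] at hl
    · obtain rfl : x' = x := by simpa using hhead
      obtain ⟨hl, hlink⟩ := memBR_cons_cons.1 hl
      exact ⟨y :: l, ⟨y, ⟨hl, rfl⟩, hlink⟩, rfl⟩
  · rintro ⟨l, ⟨y, ⟨hl, hhead⟩, hlink⟩, rfl⟩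
    obtain ⟨l, rfl⟩ : ∃ l', l = y :: l' := ⟨l.tail, List.eq_cons_of_mem_head? hhead⟩
    exact ⟨memBR_cons_cons.2 ⟨hl, hlink⟩, rfl⟩

lemma brSet_finite (m x : ℕ) : (brSet a b k (m + 1) x).Finite := by
  induction m generalizing x with
  | zero => exact (Set.finite_singleton [x]).subset fun l hl => eq_singleton_of_mem_brSet_one hl
  | succ m ih =>
    rw [brSet_succ_succ]
    refine (((Set.finite_Iic x).biUnion fun y _ => ih y).image (List.cons x)).subset ?_
    rintro _ ⟨l, ⟨y, hl, hlink⟩, rfl⟩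
    exact ⟨l, Set.mem_biUnion (Set.mem_Iic.2 hlink.2.1) hl, rfl⟩

lemma mod_ne_mod (ha : 1 ≤ a) (hab : a < b) (hbk : b ≤ k) : a % k ≠ b % k := by
  rw [Nat.mod_eq_of_lt (hab.trans_le hbk)]
  rcases hbk.lt_or_eq with hbk | rfl
  · rw [Nat.mod_eq_of_lt hbk]
    exact hab.ne
  · rw [Nat.mod_self]
    omega

lemma exists_eq_mul_add (hab : a < b) (hbk : b ≤ k) {y : ℕ} (hy : 0 < y)
    (hmod : y % k = a % k ∨ y % k = b % k) : ∃ p, y = k * p + a ∨ y = k * p + b := by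
  have hy_eq := Nat.div_add_mod y k
  rw [Nat.mod_eq_of_lt (hab.trans_le hbk)] at hmod
  rcases hmod with hmod | hmod
  · exact ⟨y / k, Or.inl (by omega)⟩
  rcases hbk.lt_or_eq with hbk | rfl
  · rw [Nat.mod_eq_of_lt hbk] at hmod
    exact ⟨y / k, Or.inr (by omega)⟩
  · rw [Nat.mod_self] at hmod
    obtain ⟨p, hp⟩ := Nat.exists_eq_add_one_of_ne_zero fun (h : y / b = 0) => by
      rw [h] at hy_eq; omega
    exact ⟨p, Or.inr (by rw [← hy_eq, hmod, hp]; ring)⟩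

lemma mul_le_or_eq_or_eq_add_or_le (k p H : ℕ) :
    k * H + k ≤ k * p ∨ k * H = k * p ∨ k * H = k * p + k ∨ k * p + 2 * k ≤ k * H := by
  rcases Nat.lt_or_ge H p with h | h
  · exact Or.inl (by simpa [mul_add] using Nat.mul_le_mul_left k h)
  obtain ⟨d, rfl⟩ := Nat.exists_eq_add_of_le h
  rcases d with _ | _ | d
  · simp
  · simp [mul_add]
  · right; right; right
    nlinarith

lemma brLink_iff (ha : 1 ≤ a) (hab : a < b) (hbk : b ≤ k) {c H y : ℕ} (hc : c = a ∨ c = b)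
    (hy : 0 < y) (hymod : y % k = a % k ∨ y % k = b % k) :
    BrLink a b k (k * H + c) y ↔ y = k * H + a ∨ y + k = k * H + b := by
  have hne := mod_ne_mod ha hab hbk
  obtain ⟨p, hp⟩ := exists_eq_mul_add hab hbk hy hymod
  -- The link forces `p = H` when `y ≡ a` and `p + 1 = H` when `y ≡ b`; `omega` only needs the
  -- position of `k * p` relative to `k * H`.
  rcases hc with rfl | rfl <;> rcases hp with rfl | rfl <;>
    simp only [BrLink, Nat.mul_add_mod, hne, hne.symm, true_or, or_true, true_and, false_imp_iff,
      and_true, forall_const] <;>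
    rcases mul_le_or_eq_or_eq_add_or_le k p H with h | h | h | h <;> omega

lemma brSet_succ_succ_residue (ha : 1 ≤ a) (hab : a < b) (hbk : b ≤ k) {c : ℕ}
    (hc : c = a ∨ c = b) (m : ℕ) :
    brSet a b k (m + 2) c = List.cons c '' brSet a b k (m + 1) a := by
  have hlink : ∀ {y l}, l ∈ brSet a b k (m + 1) y → (BrLink a b k c y ↔ y = a) := by
    intro y l hl
    obtain ⟨hy, hymod⟩ := pos_and_mod_of_mem_brSet hl
    have := brLink_iff ha hab hbk (H := 0) hc hy hymod
    simp only [mul_zero, zero_add] at this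
    rw [this]
    omega
  rw [brSet_succ_succ]
  congr 1
  ext l
  constructor
  · rintro ⟨y, hl, hyl⟩
    obtain rfl := (hlink hl).1 hyl
    exact hl
  · exact fun hl => ⟨a, hl, (hlink hl).2 rfl⟩

lemma brSet_succ_succ_mul_succ_add (ha : 1 ≤ a) (hab : a < b) (hbk : b ≤ k) {c : ℕ}
    (hc : c = a ∨ c = b) (m H : ℕ) :
    brSet a b k (m + 2) (k * (H + 1) + c) =
      List.cons (k * (H + 1) + c) '' (brSet a b k (m + 1) (k * (H + 1) + a) ∪
        brSet a b k (m + 1) (k * H + b)) := by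
  have hlink : ∀ {y l}, l ∈ brSet a b k (m + 1) y →
      (BrLink a b k (k * (H + 1) + c) y ↔ y = k * (H + 1) + a ∨ y = k * H + b) := fun hl => by
    obtain ⟨hy, hymod⟩ := pos_and_mod_of_mem_brSet hl
    rw [brLink_iff ha hab hbk hc hy hymod, mul_add_one]
    omega
  rw [brSet_succ_succ]
  congr 1
  ext l
  constructor
  · rintro ⟨y, hl, hyl⟩
    rcases (hlink hl).1 hyl with rfl | rfl
    · exact Or.inl hl
    · exact Or.inr hl
  · rintro (hl | hl)
    · exact ⟨_, hl, (hlink hl).2 (Or.inl rfl)⟩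
    · exact ⟨_, hl, (hlink hl).2 (Or.inr rfl)⟩

end BR

section GF

variable (a b k : ℕ) (q u v : ℂ)

def brWeight (l : List ℕ) : ℂ := u ^ lcount k a l * v ^ lcount k b l * q ^ l.sum

noncomputable def brGF (m x : ℕ) : ℂ := ∑ᶠ l ∈ brSet a b k m x, brWeight a b k q u v l

lemma lcount_cons (c x : ℕ) (l : List ℕ) :
    lcount k c (x :: l) = lcount k c [x] + lcount k c l := by
  simp only [lcount, List.filter_cons, List.filter_nil]
  split <;> simp [add_comm]

lemma brWeight_cons (x : ℕ) (l : List ℕ) :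
    brWeight a b k q u v (x :: l) = brWeight a b k q u v [x] * brWeight a b k q u v l := by
  simp only [brWeight, lcount_cons k _ x l, List.sum_cons, List.sum_nil, add_zero, pow_add]
  ring

variable {a b k}

lemma brWeight_singleton_of_mod_a {x : ℕ} (hne : a % k ≠ b % k) (hx : x % k = a % k) :
    brWeight a b k q u v [x] = u * q ^ x := by
  simp [brWeight, lcount, hx, hne]

lemma brWeight_singleton_of_mod_b {x : ℕ} (hne : a % k ≠ b % k) (hx : x % k = b % k) :
    brWeight a b k q u v [x] = v * q ^ x := by
  simp [brWeight, lcount, hx, hne.symm]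

lemma finsum_brWeight_cons_image (x : ℕ) (s : Set (List ℕ)) :
    ∑ᶠ l ∈ List.cons x '' s, brWeight a b k q u v l =
      brWeight a b k q u v [x] * ∑ᶠ l ∈ s, brWeight a b k q u v l := by
  rw [finsum_mem_image List.cons_injective.injOn, mul_finsum_mem]
  exact finsum_mem_congr rfl fun l _ => brWeight_cons a b k q u v x l

lemma brGF_one (ha : 1 ≤ a) (hab : a < b) (hbk : b ≤ k) {c : ℕ} (hc : c = a ∨ c = b)
    (H : ℕ) :
    brGF a b k q u v 1 (k * H + c) = if H = 0 then brWeight a b k q u v [c] else 0 := by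
  rw [brGF, brSet_one (by omega) (by omega)]
  rcases Nat.eq_zero_or_pos H with rfl | hH
  · simp [hc]
  · have : k ≤ k * H := Nat.le_mul_of_pos_right k hH
    have hx : ¬(k * H + c = a ∨ k * H + c = b) := by omega
    simp [hx, hH.ne']

lemma brGF_succ_succ_residue (ha : 1 ≤ a) (hab : a < b) (hbk : b ≤ k) {c : ℕ}
    (hc : c = a ∨ c = b) (m : ℕ) :
    brGF a b k q u v (m + 2) c = brWeight a b k q u v [c] * brGF a b k q u v (m + 1) a := by
  rw [brGF, brSet_succ_succ_residue ha hab hbk hc, finsum_brWeight_cons_image, brGF]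

lemma brGF_succ_succ_mul_succ_add (ha : 1 ≤ a) (hab : a < b) (hbk : b ≤ k) {c : ℕ}
    (hc : c = a ∨ c = b) (m H : ℕ) :
    brGF a b k q u v (m + 2) (k * (H + 1) + c) = brWeight a b k q u v [k * (H + 1) + c] *
      (brGF a b k q u v (m + 1) (k * (H + 1) + a) + brGF a b k q u v (m + 1) (k * H + b)) := by
  have hdisj : Disjoint (brSet a b k (m + 1) (k * (H + 1) + a)) (brSet a b k (m + 1) (k * H + b)) :=
    Set.disjoint_left.2 fun l h₁ h₂ => by
      have := h₁.2.symm.trans h₂.2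
      rw [Option.some_inj, mul_add_one] at this
      omega
  rw [brGF, brSet_succ_succ_mul_succ_add ha hab hbk hc, finsum_brWeight_cons_image,
    finsum_mem_union hdisj (brSet_finite _ _) (brSet_finite _ _), brGF, brGF]

theorem brGF_mul_add_eq (ha : 1 ≤ a) (hab : a < b) (hbk : b ≤ k) (hq : ‖q‖ < 1)
    (m H : ℕ) :
    brGF a b k q u v (m + 1) (k * H + a) = u ^ (m + 1 - H) * v ^ H *
      q ^ ((m + 1) * a + k * (H + 1).choose 2 + (b - a) * H) * gbinom (q ^ k) m H ∧
    brGF a b k q u v (m + 1) (k * H + b) = u ^ (m - H) * v ^ (H + 1) *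
      q ^ ((m + 1) * a + k * (H + 1).choose 2 + (b - a) * (H + 1)) * gbinom (q ^ k) m H := by
  have hne := mod_ne_mod ha hab hbk
  have ht : ‖q ^ k‖ < 1 := by
    rw [norm_pow]
    exact pow_lt_one₀ (norm_nonneg q) hq (by omega)
  have hwa : ∀ {x}, x % k = a % k → brWeight a b k q u v [x] = u * q ^ x :=
    brWeight_singleton_of_mod_a q u v hne
  have hwb : ∀ {x}, x % k = b % k → brWeight a b k q u v [x] = v * q ^ x :=
    brWeight_singleton_of_mod_b q u v hne
  obtain ⟨d, rfl⟩ := Nat.exists_eq_add_of_le hab.le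
  simp only [Nat.add_sub_cancel_left]
  induction m generalizing H with
  | zero =>
    rw [brGF_one q u v ha hab hbk (Or.inl rfl), brGF_one q u v ha hab hbk (Or.inr rfl)]
    rcases H with _ | H
    · simp [hwa rfl, hwb rfl, gbinom_zero_right ht, pow_add]
    · simp [gbinom_of_lt]
  | succ m ih =>
    rcases H with _ | H
    · have h₀ := (ih 0).1
      simp only [mul_zero, zero_add] at h₀ ⊢
      rw [brGF_succ_succ_residue q u v ha hab hbk (Or.inl rfl),
        brGF_succ_succ_residue q u v ha hab hbk (Or.inr rfl), h₀, hwa rfl, hwb rfl,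
        gbinom_zero_right ht, gbinom_zero_right ht, Nat.sub_zero, Nat.sub_zero]
      constructor <;> ring
    rw [brGF_succ_succ_mul_succ_add q u v ha hab hbk (Or.inl rfl),
      brGF_succ_succ_mul_succ_add q u v ha hab hbk (Or.inr rfl), (ih (H + 1)).1, (ih H).2,
      gbinom_succ_succ ht, hwa (Nat.mul_add_mod ..), hwb (Nat.mul_add_mod ..)]
    -- For `H > m` both sides vanish; otherwise the truncated exponents `m + 1 - H` are honest.
    rcases le_or_gt H m with hH | hH
    · obtain ⟨n, rfl⟩ := Nat.exists_eq_add_of_le hH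
      have hC : (H + 1 + 1).choose 2 = (H + 1).choose 2 + (H + 1) := by
        rw [Nat.choose_succ_succ', Nat.choose_one_right, add_comm]
      rw [hC, show H + n + 1 + 1 - (H + 1) = n + 1 by omega, show H + n + 1 - (H + 1) = n by omega,
        Nat.add_sub_cancel_left]
      constructor <;> ring
    · simp [gbinom_of_lt _ hH, gbinom_of_lt _ (hH.trans (Nat.lt_succ_self _))]

end GF

theorem gen_BR_mha_general (a b k m h : ℕ) (ha : 1 ≤ a) (hab : a < b) (hbk : b ≤ k)
    (hm : 1 ≤ m) (q u v : ℂ) (hq : ‖q‖ < 1) :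
    (∑ᶠ l ∈ {l : List ℕ | memBR a b k m l ∧ l.head? = some (k * h + a)},
        u ^ lcount k a l * v ^ lcount k b l * q ^ l.sum
      = u ^ (m - h) * v ^ h *
          q ^ (m * a + k * Nat.choose (h + 1) 2 + (b - a) * h) * gbinom (q ^ k) (m - 1) h)
    ∧ (∑ᶠ l ∈ {l : List ℕ | memBR a b k m l ∧ l.head? = some (k * h + b)},
        u ^ lcount k a l * v ^ lcount k b l * q ^ l.sum
      = u ^ (m - h - 1) * v ^ (h + 1) *
          q ^ (m * a + k * Nat.choose (h + 1) 2 + (b - a) * (h + 1)) *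
          gbinom (q ^ k) (m - 1) h) := by
  obtain ⟨m, rfl⟩ := Nat.exists_eq_add_of_le' hm
  obtain ⟨hA, hB⟩ := brGF_mul_add_eq q u v ha hab hbk hq m h
  refine ⟨hA.trans ?_, hB.trans ?_⟩
  · rw [Nat.add_sub_cancel]
  · rw [Nat.add_sub_cancel, Nat.sub_right_comm, Nat.add_sub_cancel]

/-- Generating functions for the partitions in `BR_{a,b,k}(m,h,a)` (largest part `kh+a`) and
`BR_{a,b,k}(m,h,b)` (largest part `kh+b`). -/
theorem gen_BR_mha (a b k m h : ℕ) (ha : 1 ≤ a) (hab : a < b) (hbk : b ≤ k)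
    (hm : 1 ≤ m) (hh : h ≤ m - 1) (q u v : ℂ) (hq : ‖q‖ < 1) :
    (∑ᶠ l ∈ {l : List ℕ | memBR a b k m l ∧ l.head? = some (k * h + a)},
        u ^ lcount k a l * v ^ lcount k b l * q ^ l.sum
      = u ^ (m - h) * v ^ h *
          q ^ (m * a + k * Nat.choose (h + 1) 2 + (b - a) * h) * gbinom (q ^ k) (m - 1) h)
    ∧ (∑ᶠ l ∈ {l : List ℕ | memBR a b k m l ∧ l.head? = some (k * h + b)},
        u ^ lcount k a l * v ^ lcount k b l * q ^ l.sum
      = u ^ (m - h - 1) * v ^ (h + 1) *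
          q ^ (m * a + k * Nat.choose (h + 1) 2 + (b - a) * (h + 1)) *
          gbinom (q ^ k) (m - 1) h) :=
  gen_BR_mha_general a b k m h ha hab hbk hm q u v hq
end
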